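/- Let m ≥ 1, let f : ℝ^m → ℝ^m and q : ℝ × ℝ → ℝ^m be three times continuously differentiable with ∂_t q(t,x) + ∂_x( f(q(t,x)) ) = 0 for all (t,x). Fix x ∈ ℝ, t⁰ ∈ ℝ, and Δt > 0, and define the Taylor-discretized time-averaged flux F_T := f(q(t⁰,x)) − (Δt/2)·D f(q)( ∂_x f(q) ) + (Δt²/6)·[ D²f(q)( ∂_x f(q), ∂_x f(q) ) + D f(q)( ∂_x [ D f(q)( ∂_x f(q) ) ] ) ], where all quantities on the right are evaluated at (t⁰, x). Then ‖ F_T − (1/Δt) ∫_{t⁰}^{t⁰+Δt} f(q(t,x)) dt ‖ ≤ (Δt³/24) · sup_{t ∈ [t⁰, t⁰+Δt]} ‖ ∂_t³ ( f(q(t,x)) ) ‖; in particular the Taylor discretization approximates the exact time-averaged flux to third order in Δt. -/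

import Mathlib

/-!
Along the line `x = const` put `g t = f (q (t, x))`. The chain rule and the PDE give
`g' = -Df(q) ∂ₓf(q)`; differentiating once more in `t`, using the PDE again for `∂ₜq` and the
symmetry of the mixed partials of `f ∘ q`, gives
`g'' = D²f(q)(∂ₓf(q), ∂ₓf(q)) + Df(q) ∂ₓ[Df(q) ∂ₓf(q)]`. Hence `Δt • F_T` is the cubic Taylor
polynomial at `t⁰` of the antiderivative `G s = ∫_{t⁰}^s g`, evaluated at `t⁰ + Δt`, and the
Lagrange bound `‖G - T₃G‖ ≤ sup ‖G⁽⁴⁾‖ Δt⁴ / 4! = sup ‖g'''‖ Δt⁴ / 24` gives the estimate.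
-/

open intervalIntegral Set Nat

section Taylor

variable {E : Type*} [NormedAddCommGroup E] [NormedSpace ℝ E]

theorem hasDerivAt_pow_div_factorial (a s : ℝ) (n : ℕ) :
    HasDerivAt (fun u => (u - a) ^ (n + 1) / (n + 1)!) ((s - a) ^ n / n !) s := by
  refine ((((hasDerivAt_id s).sub_const a).pow (n + 1)).div_const _).congr_deriv ?_
  rw [factorial_succ]
  push_cast
  field_simp
  simp

theorem norm_le_pow_div_factorial_of_hasDerivAt {h h' : ℝ → E} {a b C : ℝ} (n : ℕ)
    (hh : ∀ s, HasDerivAt h (h' s) s) (ha : h a = 0)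
    (bound : ∀ s ∈ Icc a b, ‖h' s‖ ≤ C * ((s - a) ^ n / n !)) :
    ∀ s ∈ Icc a b, ‖h s‖ ≤ C * ((s - a) ^ (n + 1) / (n + 1)!) :=
  image_norm_le_of_norm_deriv_right_le_deriv_boundary
    (fun s _ => (hh s).continuousAt.continuousWithinAt) (fun s _ => (hh s).hasDerivWithinAt)
    (by simp [ha]) (fun s => (hasDerivAt_pow_div_factorial a s n).const_mul C)
    (fun s hs => bound s (Ico_subset_Icc_self hs))

noncomputable def taylorSum (g : ℝ → E) (n : ℕ) (a s : ℝ) : E :=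
  ∑ k ∈ Finset.range n, ((s - a) ^ k / k !) • iteratedDeriv k g a

theorem taylorSum_succ_self (g : ℝ → E) (n : ℕ) (a : ℝ) : taylorSum g (n + 1) a a = g a := by
  simp [taylorSum, Finset.sum_range_succ']

theorem hasDerivAt_taylorSum_succ (g : ℝ → E) (n : ℕ) (a s : ℝ) :
    HasDerivAt (taylorSum g (n + 1) a) (taylorSum (deriv g) n a s) s := by
  unfold taylorSum
  simp_rw [Finset.sum_range_succ' _ n, iteratedDeriv_succ', pow_zero]
  exact (HasDerivAt.fun_sum fun k _ =>
    (hasDerivAt_pow_div_factorial a s k).smul_const (iteratedDeriv k (deriv g) a)).add_const _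

-- Sharper by a factor `n + 1` than `taylor_mean_remainder_bound`; the constant `1 / 24` needs this.
theorem norm_sub_taylorSum_le {g : ℝ → E} {a b C : ℝ} (n : ℕ) (hg : ContDiff ℝ n g)
    (hC : ∀ s ∈ Icc a b, ‖iteratedDeriv n g s‖ ≤ C) :
    ∀ s ∈ Icc a b, ‖g s - taylorSum g n a s‖ ≤ C * ((s - a) ^ n / n !) := by
  induction n generalizing g with
  | zero => simpa [taylorSum] using hC
  | succ n ih =>
    have hg : ContDiff ℝ (n + 1 : WithTop ℕ∞) g := by exact_mod_cast hg
    obtain ⟨hg_diff, -, hg'⟩ := contDiff_succ_iff_deriv.mp hg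
    refine norm_le_pow_div_factorial_of_hasDerivAt n
      (fun s => (hg_diff s).hasDerivAt.sub (hasDerivAt_taylorSum_succ g n a s))
      (by simp [taylorSum_succ_self]) (ih hg' ?_)
    simpa only [iteratedDeriv_succ'] using hC

theorem norm_taylor_sub_average_le [CompleteSpace E] {g : ℝ → E} (hg : ContDiff ℝ 3 g)
    {a Δt M : ℝ} (hΔt : 0 < Δt) (hM : ∀ t ∈ Icc a (a + Δt), ‖iteratedDeriv 3 g t‖ ≤ M) :
    ‖g a + (Δt / 2) • deriv g a + (Δt ^ 2 / 6) • deriv (deriv g) a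
        - (1 / Δt) • ∫ t in a..a + Δt, g t‖ ≤ Δt ^ 3 / 24 * M := by
  set G : ℝ → E := fun u => ∫ t in a..u, g t
  have hG' : deriv G = g := funext (hg.continuous.deriv_integral g a)
  have hG : ContDiff ℝ 4 G := contDiff_succ_iff_deriv.mpr
    ⟨fun s => (hg.continuous.integral_hasStrictDerivAt a s).hasDerivAt.differentiableAt, by simp,
      hG' ▸ hg⟩
  have hremainder := norm_sub_taylorSum_le 4 hG (C := M)
    (by simpa only [iteratedDeriv_succ', hG'] using hM) (a + Δt) ⟨by linarith, le_rfl⟩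
  have hsum : taylorSum G 4 a (a + Δt) =
      Δt • (g a + (Δt / 2) • deriv g a + (Δt ^ 2 / 6) • deriv (deriv g) a) := by
    simp only [taylorSum, Finset.sum_range_succ, Finset.sum_range_zero, iteratedDeriv_succ',
      iteratedDeriv_zero, hG', add_sub_cancel_left, G, integral_same, smul_zero, zero_add,
      smul_add, smul_smul]
    norm_num [factorial]
    module
  rw [add_sub_cancel_left] at hremainder
  calc _ = ‖(1 / Δt) • (G (a + Δt) - taylorSum G 4 a (a + Δt))‖ := by
        rw [hsum, smul_sub, smul_smul, one_div_mul_cancel hΔt.ne', one_smul, norm_sub_rev]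
    _ = (1 / Δt) * ‖G (a + Δt) - taylorSum G 4 a (a + Δt)‖ := by
        rw [norm_smul, Real.norm_of_nonneg (by positivity)]
    _ ≤ (1 / Δt) * (M * (Δt ^ 4 / 4!)) := by gcongr
    _ = Δt ^ 3 / 24 * M := by
        rw [show (4! : ℝ) = 24 by norm_num [factorial]]
        field_simp

end Taylor

section PartialDerivatives

variable {F : Type*} [NormedAddCommGroup F] [NormedSpace ℝ F] {v : ℝ × ℝ → F}

theorem hasDerivAt_slice_fst {v' : ℝ × ℝ →L[ℝ] F} {t x : ℝ} (hv : HasFDerivAt v v' (t, x)) :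
    HasDerivAt (fun τ => v (τ, x)) (v' (1, 0)) t :=
  hv.comp_hasDerivAt t ((hasDerivAt_id t).prodMk (hasDerivAt_const t x))

theorem hasDerivAt_slice_snd {v' : ℝ × ℝ →L[ℝ] F} {t x : ℝ} (hv : HasFDerivAt v v' (t, x)) :
    HasDerivAt (fun s => v (t, s)) (v' (0, 1)) x :=
  hv.comp_hasDerivAt x ((hasDerivAt_const x t).prodMk (hasDerivAt_id x))

theorem hasDerivAt_deriv_slice_snd (hv : ContDiff ℝ 2 v) (t x : ℝ) :
    HasDerivAt (fun τ => deriv (fun s => v (τ, s)) x)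
      (fderiv ℝ (fderiv ℝ v) (t, x) (1, 0) (0, 1)) t := by
  have hv1 : Differentiable ℝ v := hv.differentiable (by norm_num)
  have hv2 : Differentiable ℝ (fderiv ℝ v) :=
    (hv.fderiv_right (m := 1) (by norm_num)).differentiable one_ne_zero
  simp_rw [(hasDerivAt_slice_snd (hv1 _).hasFDerivAt).deriv]
  exact (hasDerivAt_slice_fst ((hv2 _).hasFDerivAt.clm_apply (hasFDerivAt_const _ _))).congr_deriv
    (by simp)

theorem hasDerivAt_deriv_slice_fst (hv : ContDiff ℝ 2 v) (t x : ℝ) :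
    HasDerivAt (fun s => deriv (fun τ => v (τ, s)) t)
      (fderiv ℝ (fderiv ℝ v) (t, x) (0, 1) (1, 0)) x := by
  have hv1 : Differentiable ℝ v := hv.differentiable (by norm_num)
  have hv2 : Differentiable ℝ (fderiv ℝ v) :=
    (hv.fderiv_right (m := 1) (by norm_num)).differentiable one_ne_zero
  simp_rw [(hasDerivAt_slice_fst (hv1 _).hasFDerivAt).deriv]
  exact (hasDerivAt_slice_snd ((hv2 _).hasFDerivAt.clm_apply (hasFDerivAt_const _ _))).congr_deriv
    (by simp)

theorem deriv_slice_comm (hv : ContDiff ℝ 2 v) (t x : ℝ) :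
    deriv (fun τ => deriv (fun s => v (τ, s)) x) t =
      deriv (fun s => deriv (fun τ => v (τ, s)) t) x := by
  rw [(hasDerivAt_deriv_slice_snd hv t x).deriv, (hasDerivAt_deriv_slice_fst hv t x).deriv]
  exact hv.contDiffAt.isSymmSndFDerivAt (by simp) _ _

end PartialDerivatives

section CauchyKowalewski

variable {E : Type*} [NormedAddCommGroup E] [NormedSpace ℝ E] {f : E → E} {q : ℝ × ℝ → E}

theorem deriv_flux_time_eq (hf : Differentiable ℝ f) (hq : Differentiable ℝ q)
    (pde : ∀ t x : ℝ, deriv (fun τ => q (τ, x)) t + deriv (fun s => f (q (t, s))) x = 0)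
    (t x : ℝ) :
    deriv (fun τ => f (q (τ, x))) t =
      -fderiv ℝ f (q (t, x)) (deriv (fun s => f (q (t, s))) x) := by
  rw [← map_neg, ← eq_neg_of_add_eq_zero_left (pde t x)]
  exact fderiv_comp_deriv t (hf _) ((hq _).comp t (by fun_prop))

theorem deriv_deriv_flux_time_eq (hf : ContDiff ℝ 2 f) (hq : ContDiff ℝ 2 q)
    (pde : ∀ t x : ℝ, deriv (fun τ => q (τ, x)) t + deriv (fun s => f (q (t, s))) x = 0)
    (t x : ℝ) :
    deriv (deriv (fun τ => f (q (τ, x)))) t =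
      iteratedFDeriv ℝ 2 f (q (t, x))
          ![deriv (fun s => f (q (t, s))) x, deriv (fun s => f (q (t, s))) x]
        + fderiv ℝ f (q (t, x))
            (deriv (fun s => fderiv ℝ f (q (t, s)) (deriv (fun σ => f (q (t, σ))) s)) x) := by
  have hf1 : Differentiable ℝ f := hf.differentiable (by norm_num)
  have hq1 : Differentiable ℝ q := hq.differentiable (by norm_num)
  have hfirst := deriv_flux_time_eq hf1 hq1 pde
  have hDf : HasDerivAt (fun τ => fderiv ℝ f (q (τ, x)))
      (fderiv ℝ (fderiv ℝ f) (q (t, x)) (deriv (fun τ => q (τ, x)) t)) t :=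
    ((hf.fderiv_right (m := 1) (by norm_num)).differentiable one_ne_zero _).hasFDerivAt
      |>.comp_hasDerivAt t ((hq1 _).comp t (by fun_prop)).hasDerivAt
  have hu : ContDiff ℝ 2 (fun p => f (q p)) := hf.comp hq
  have hw := (hasDerivAt_deriv_slice_snd hu t x).differentiableAt.hasDerivAt
  have hmixed : deriv (fun τ => deriv (fun s => f (q (τ, s))) x) t =
      -deriv (fun s => fderiv ℝ f (q (t, s)) (deriv (fun σ => f (q (t, σ))) s)) x := by
    rw [deriv_slice_comm hu, ← deriv.fun_neg]
    simp only [hfirst]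
  rw [funext (hfirst · x), (hDf.clm_apply hw).fun_neg.deriv, hmixed,
    eq_neg_of_add_eq_zero_left (pde t x), iteratedFDeriv_two_apply]
  simp only [map_neg, neg_apply, neg_add_rev, neg_neg, Matrix.cons_val_zero,
    Matrix.cons_val_one, Matrix.cons_val_fin_one]
  exact add_comm _ _

end CauchyKowalewski

theorem taylor_discretization_third_order_general
    (m : ℕ)
    (f : EuclideanSpace ℝ (Fin m) → EuclideanSpace ℝ (Fin m))
    (hf : ContDiff ℝ 3 f)
    (q : ℝ × ℝ → EuclideanSpace ℝ (Fin m)) (hq : ContDiff ℝ 3 q)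
    (pde : ∀ t x : ℝ,
      deriv (fun τ => q (τ, x)) t + deriv (fun s => f (q (t, s))) x = 0)
    (x t₀ Δt : ℝ) (hΔt : 0 < Δt)
    (w : EuclideanSpace ℝ (Fin m))
    (hwdef : w = deriv (fun s => f (q (t₀, s))) x)
    (FT : EuclideanSpace ℝ (Fin m))
    (hFT : FT = f (q (t₀, x))
        - (Δt / 2) • (fderiv ℝ f (q (t₀, x))) w
        + (Δt ^ 2 / 6) •
          (iteratedFDeriv ℝ 2 f (q (t₀, x)) ![w, w]
            + (fderiv ℝ f (q (t₀, x)))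
                (deriv (fun s =>
                  (fderiv ℝ f (q (t₀, s)))
                    (deriv (fun σ => f (q (t₀, σ))) s)) x))) :
    ‖FT - (1 / Δt) • (∫ t in t₀..(t₀ + Δt), f (q (t, x)))‖
      ≤ (Δt ^ 3 / 24) *
        ⨆ t : Icc t₀ (t₀ + Δt),
          ‖iteratedDeriv 3 (fun τ => f (q (τ, x))) t‖ := by
  set g := fun τ => f (q (τ, x))
  have hg : ContDiff ℝ 3 g := hf.comp (hq.comp (by fun_prop))
  have hf2 : ContDiff ℝ 2 f := hf.of_le (by norm_num)
  have hq2 : ContDiff ℝ 2 q := hq.of_le (by norm_num)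
  have hFT_taylor :
      FT = g t₀ + (Δt / 2) • deriv g t₀ + (Δt ^ 2 / 6) • deriv (deriv g) t₀ := by
    rw [hFT, hwdef, deriv_flux_time_eq (hf2.differentiable two_ne_zero)
      (hq2.differentiable two_ne_zero) pde, deriv_deriv_flux_time_eq hf2 hq2 pde, smul_neg,
      sub_eq_add_neg]
  have hbdd : BddAbove (range fun t : Icc t₀ (t₀ + Δt) => ‖iteratedDeriv 3 g t‖) :=
    (isCompact_Icc.bddAbove_image (hg.continuous_iteratedDeriv 3 le_rfl).norm.continuousOn).mono
      (range_subset_iff.2 fun t => mem_image_of_mem (fun s => ‖iteratedDeriv 3 g s‖) t.2)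
  rw [hFT_taylor]
  exact norm_taylor_sub_average_le hg hΔt fun t ht => le_ciSup hbdd ⟨t, ht⟩

/-- The Taylor (Lax–Wendroff) discretization of the Picard integral
formulation approximates the exact time-averaged flux to third order in `Δt`. -/
theorem taylor_discretization_third_order
    (m : ℕ) (hm : 1 ≤ m)
    (f : EuclideanSpace ℝ (Fin m) → EuclideanSpace ℝ (Fin m))
    (hf : ContDiff ℝ 3 f)
    (q : ℝ × ℝ → EuclideanSpace ℝ (Fin m)) (hq : ContDiff ℝ 3 q)
    (pde : ∀ t x : ℝ,
      deriv (fun τ => q (τ, x)) t + deriv (fun s => f (q (t, s))) x = 0)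
    (x t₀ Δt : ℝ) (hΔt : 0 < Δt)
    (w : EuclideanSpace ℝ (Fin m))
    (hwdef : w = deriv (fun s => f (q (t₀, s))) x)
    (FT : EuclideanSpace ℝ (Fin m))
    (hFT : FT = f (q (t₀, x))
        - (Δt / 2) • (fderiv ℝ f (q (t₀, x))) w
        + (Δt ^ 2 / 6) •
          (iteratedFDeriv ℝ 2 f (q (t₀, x)) ![w, w]
            + (fderiv ℝ f (q (t₀, x)))
                (deriv (fun s =>
                  (fderiv ℝ f (q (t₀, s)))
                    (deriv (fun σ => f (q (t₀, σ))) s)) x))) :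
    ‖FT - (1 / Δt) • (∫ t in t₀..(t₀ + Δt), f (q (t, x)))‖
      ≤ (Δt ^ 3 / 24) *
        ⨆ t : Icc t₀ (t₀ + Δt),
          ‖iteratedDeriv 3 (fun τ => f (q (τ, x))) t‖ :=
  taylor_discretization_third_order_general m f hf q hq pde x t₀ Δt hΔt w hwdef FT hFT
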